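/- arXiv:2101.07501 — 4 statements merged into one kernel-verified Lean document; each statement's English description precedes it below -/
import Mathlib

section
/- Let Ω ⊂ ℝ² be a closed rectangular box with positive volume, let u : ℝ² → ℝ² be continuously differentiable on a neighborhood of Ω with div u = 0 on Ω and u = 0 on ∂Ω, let ε > 0 and π₁ > 0, and let D : ℝ² → ℝ be continuous with D(x) ≥ 1 for all x ∈ Ω. Then for every φ : ℝ² → ℝ continuously differentiable on a neighborhood of Ω, the bilinear form a^ε satisfies the coercivity estimate a^ε(φ,φ) ≥ ‖φ‖_ε², i.e. ∫_Ω (u·∇φ)φ dx + π₁ ∫_Ω D |∇φ|² dx + ε ∫_Ω φ² dx ≥ π₁ ∫_Ω |∇φ|² dx + ε ∫_Ω φ² dx. -/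
/-!
The convection term vanishes: since `div u = 0`, the field `φ² u` has divergence
`2 φ ⟪u, ∇φ⟫`, and since `u = 0` on `∂Ω`, the divergence theorem on the box gives
`∫_Ω ⟪u, ∇φ⟫ φ = 0`. The remaining inequality is `∫_Ω |∇φ|² ≤ ∫_Ω D |∇φ|²`, from `D ≥ 1`.
-/

open MeasureTheory Set

theorem mem_frontier_Icc_of_apply_eq {ι : Type*} [Finite ι] {a b x : ι → ℝ}
    (hx : x ∈ Icc a b) {i : ι} (hi : x i = a i ∨ x i = b i) : x ∈ frontier (Icc a b) := by
  rw [isClosed_Icc.frontier_eq, ← pi_univ_Icc, interior_pi_set finite_univ]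
  refine ⟨by rwa [pi_univ_Icc], fun hint => ?_⟩
  have hxi : x i ∈ Ioo (a i) (b i) := by simpa using hint i (mem_univ i)
  rcases hi with h | h <;> simp [h] at hxi

theorem integral_divergence_eq_zero_of_vanishing_on_frontier {n : ℕ} {E : Type*}
    [NormedAddCommGroup E] [NormedSpace ℝ E] [CompleteSpace E] {a b : Fin (n + 1) → ℝ}
    (hle : a ≤ b) {f : (Fin (n + 1) → ℝ) → Fin (n + 1) → E}
    {f' : (Fin (n + 1) → ℝ) → (Fin (n + 1) → ℝ) →L[ℝ] Fin (n + 1) → E}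
    (hc : ContinuousOn f (Icc a b))
    (hd : ∀ x ∈ pi univ fun i => Ioo (a i) (b i), HasFDerivAt f (f' x) x)
    (hi : IntegrableOn (fun x => ∑ i, f' x (Pi.single i 1) i) (Icc a b))
    (h0 : ∀ x ∈ frontier (Icc a b), f x = 0) :
    ∫ x in Icc a b, ∑ i, f' x (Pi.single i 1) i = 0 := by
  rw [integral_divergence_of_hasFDerivAt_off_countable a b hle f f' ∅ countable_empty hc
    (by simpa using hd) hi]
  have hface : ∀ i, ∀ c ∈ ({a i, b i} : Set ℝ),
      ∫ y in Icc (a ∘ i.succAbove) (b ∘ i.succAbove), f (i.insertNth c y) i = 0 := by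
    intro i c hc
    refine setIntegral_eq_zero_of_forall_eq_zero fun y hy => ?_
    have hcab : c ∈ Icc (a i) (b i) := by
      rcases hc with rfl | rfl
      exacts [left_mem_Icc.2 (hle i), right_mem_Icc.2 (hle i)]
    rw [h0 _ (mem_frontier_Icc_of_apply_eq (i := i) (Fin.insertNth_mem_Icc.2 ⟨hcab, hy⟩)
      (by simpa using hc)), Pi.zero_apply]
  exact Finset.sum_eq_zero fun i _ => by
    rw [hface i (b i) (by simp), hface i (a i) (by simp), sub_zero]

namespace EuclideanSpace

variable {ι : Type*} [Fintype ι] [DecidableEq ι]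

noncomputable def divergence (F : EuclideanSpace ℝ ι → EuclideanSpace ℝ ι)
    (x : EuclideanSpace ℝ ι) : ℝ :=
  ∑ i, fderiv ℝ F x (EuclideanSpace.single i 1) i

theorem sum_map_single_mul_apply (L : EuclideanSpace ℝ ι →L[ℝ] ℝ) (v : EuclideanSpace ℝ ι) :
    ∑ i, L (EuclideanSpace.single i 1) * v i = L v := by
  conv_rhs => rw [← (EuclideanSpace.basisFun ι ℝ).sum_repr v]
  simp [map_sum, mul_comm]

theorem divergence_smul {g : EuclideanSpace ℝ ι → ℝ} {F : EuclideanSpace ℝ ι → EuclideanSpace ℝ ι}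
    {x : EuclideanSpace ℝ ι} (hg : DifferentiableAt ℝ g x) (hF : DifferentiableAt ℝ F x) :
    divergence (fun y => g y • F y) x = g x * divergence F x + fderiv ℝ g x (F x) := by
  rw [divergence, divergence, fderiv_fun_smul hg hF, Finset.mul_sum,
    ← sum_map_single_mul_apply, ← Finset.sum_add_distrib]
  simp

theorem continuousOn_divergence {F : EuclideanSpace ℝ ι → EuclideanSpace ℝ ι}
    {U : Set (EuclideanSpace ℝ ι)} (hF : ContDiffOn ℝ 1 F U) (hU : IsOpen U) :
    ContinuousOn (divergence F) U := by
  have := hF.continuousOn_fderiv_of_isOpen hU le_rfl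
  unfold divergence
  fun_prop

theorem integral_divergence_eq_zero {n : ℕ} {a b : Fin (n + 1) → ℝ} (hle : a ≤ b)
    {U : Set (EuclideanSpace ℝ (Fin (n + 1)))} (hU : IsOpen U)
    (hsub : WithLp.ofLp ⁻¹' Icc a b ⊆ U)
    {F : EuclideanSpace ℝ (Fin (n + 1)) → EuclideanSpace ℝ (Fin (n + 1))}
    (hF : ContDiffOn ℝ 1 F U) (h0 : ∀ x ∈ frontier (WithLp.ofLp ⁻¹' Icc a b), F x = 0) :
    ∫ x in WithLp.ofLp ⁻¹' Icc a b, divergence F x = 0 := by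
  let e := PiLp.continuousLinearEquiv 2 ℝ (fun _ : Fin (n + 1) => ℝ)
  have hmem : ∀ y ∈ Icc a b, WithLp.toLp 2 y ∈ U := fun y hy => hsub hy
  refine ((PiLp.volume_preserving_ofLp _).setIntegral_preimage_emb
    (MeasurableEquiv.toLp 2 _).symm.measurableEmbedding
    (fun y => divergence F (WithLp.toLp 2 y)) _).trans ?_
  refine integral_divergence_eq_zero_of_vanishing_on_frontier (f := fun y => e (F (e.symm y)))
    (f' := fun y => (e : _ →L[ℝ] _).comp ((fderiv ℝ F (e.symm y)).comp (e.symm : _ →L[ℝ] _)))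
    hle ?_ ?_ ?_ ?_
  · exact e.continuous.comp_continuousOn
      (hF.continuousOn.comp e.symm.continuous.continuousOn hmem)
  · intro y hy
    have hyU := hmem y ⟨fun i => (hy i trivial).1.le, fun i => (hy i trivial).2.le⟩
    have hFy := ((hF.differentiableOn one_ne_zero).differentiableAt (hU.mem_nhds hyU)).hasFDerivAt
    exact e.hasFDerivAt.comp y (hFy.comp y e.symm.hasFDerivAt)
  · exact ((continuousOn_divergence hF hU).comp (PiLp.continuous_toLp 2 _).continuousOn
      hmem).integrableOn_compact isCompact_Icc
  · intro y hy
    have : WithLp.toLp 2 y ∈ frontier (WithLp.ofLp ⁻¹' Icc a b) := by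
      have h := (PiLp.homeomorph 2 (fun _ : Fin (n + 1) => ℝ)).preimage_frontier (Icc a b)
      exact h ▸ hy
    simp [h0 _ this, e]

theorem integral_inner_gradient_mul_self_eq_zero {n : ℕ} {a b : Fin (n + 1) → ℝ} (hle : a ≤ b)
    {U : Set (EuclideanSpace ℝ (Fin (n + 1)))} (hU : IsOpen U)
    (hsub : WithLp.ofLp ⁻¹' Icc a b ⊆ U)
    {u : EuclideanSpace ℝ (Fin (n + 1)) → EuclideanSpace ℝ (Fin (n + 1))}
    {φ : EuclideanSpace ℝ (Fin (n + 1)) → ℝ} (hu : ContDiffOn ℝ 1 u U) (hφ : ContDiffOn ℝ 1 φ U)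
    (hdiv : ∀ x ∈ WithLp.ofLp ⁻¹' Icc a b, divergence u x = 0)
    (hu0 : ∀ x ∈ frontier (WithLp.ofLp ⁻¹' Icc a b), u x = 0) :
    ∫ x in WithLp.ofLp ⁻¹' Icc a b, inner ℝ (u x) (gradient φ x) * φ x = 0 := by
  have hdivF : ∀ x ∈ WithLp.ofLp ⁻¹' Icc a b, divergence (fun y => φ y ^ 2 • u y) x
      = 2 * (inner ℝ (u x) (gradient φ x) * φ x) := by
    intro x hx
    have hxU := hU.mem_nhds (hsub hx)
    have hux := (hu.differentiableOn one_ne_zero).differentiableAt hxU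
    have hφx := (hφ.differentiableOn one_ne_zero).differentiableAt hxU
    rw [divergence_smul (hφx.fun_pow 2) hux, hdiv x hx,
      show fderiv ℝ (fun y => φ y ^ 2) x = _ from (hφx.hasFDerivAt.pow 2).fderiv,
      inner_gradient_right]
    simp only [mul_zero, zero_add, nsmul_eq_mul, Nat.cast_ofNat, Nat.add_one_sub_one, pow_one,
      FunLike.coe_smul, Pi.smul_apply, smul_eq_mul, Real.ringHom_apply]
    ring
  have hmeas : MeasurableSet (WithLp.ofLp ⁻¹' Icc a b : Set (EuclideanSpace ℝ (Fin (n + 1)))) :=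
    measurableSet_Icc.preimage (PiLp.continuous_ofLp 2 _).measurable
  have h := integral_divergence_eq_zero (F := fun y => φ y ^ 2 • u y) hle hU hsub
    ((hφ.pow 2).smul hu) (fun x hx => by simp [hu0 x hx])
  rw [setIntegral_congr_fun hmeas hdivF, integral_const_mul] at h
  simpa using h

end EuclideanSpace

theorem ContDiffOn.continuousOn_gradient {E : Type*} [NormedAddCommGroup E]
    [InnerProductSpace ℝ E] [CompleteSpace E] {f : E → ℝ} {U : Set E}
    (hf : ContDiffOn ℝ 1 f U) (hU : IsOpen U) : ContinuousOn (gradient f) U :=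
  (InnerProductSpace.toDual ℝ E).symm.continuous.comp_continuousOn
    (hf.continuousOn_fderiv_of_isOpen hU le_rfl)

theorem stmt1_general (a b : Fin 2 → ℝ) (hab : ∀ i, a i < b i)
    (Ω : Set (EuclideanSpace ℝ (Fin 2)))
    (hΩ : Ω = {x : EuclideanSpace ℝ (Fin 2) | ∀ i, x i ∈ Set.Icc (a i) (b i)})
    (U : Set (EuclideanSpace ℝ (Fin 2))) (hU : IsOpen U) (hΩU : Ω ⊆ U)
    (u : EuclideanSpace ℝ (Fin 2) → EuclideanSpace ℝ (Fin 2))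
    (hu : ContDiffOn ℝ 1 u U)
    (hdiv : ∀ x ∈ Ω, (∑ i, fderiv ℝ u x (EuclideanSpace.single i 1) i) = 0)
    (hubd : ∀ x ∈ frontier Ω, u x = 0)
    (ε π₁ : ℝ) (hπ₁ : 0 < π₁)
    (D : EuclideanSpace ℝ (Fin 2) → ℝ) (hD : Continuous D)
    (hD1 : ∀ x ∈ Ω, 1 ≤ D x)
    (V : Set (EuclideanSpace ℝ (Fin 2))) (hV : IsOpen V) (hΩV : Ω ⊆ V)
    (φ : EuclideanSpace ℝ (Fin 2) → ℝ)
    (hφ : ContDiffOn ℝ 1 φ V) :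
    π₁ * (∫ x in Ω, ‖gradient φ x‖ ^ 2) + ε * (∫ x in Ω, (φ x) ^ 2) ≤
      (∫ x in Ω, (inner ℝ (u x) (gradient φ x) : ℝ) * φ x)
        + π₁ * (∫ x in Ω, D x * ‖gradient φ x‖ ^ 2)
        + ε * (∫ x in Ω, (φ x) ^ 2) := by
  obtain rfl : Ω = WithLp.ofLp ⁻¹' Icc a b := hΩ.trans (by ext; simp [Pi.le_def, forall_and])
  have hΩc : IsCompact (WithLp.ofLp ⁻¹' Icc a b : Set (EuclideanSpace ℝ (Fin 2))) :=
    (PiLp.homeomorph 2 _).isCompact_preimage.2 isCompact_Icc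
  have hconvection : ∫ x in WithLp.ofLp ⁻¹' Icc a b, inner ℝ (u x) (gradient φ x) * φ x = 0 :=
    EuclideanSpace.integral_inner_gradient_mul_self_eq_zero (fun i => (hab i).le)
      (hU.inter hV) (subset_inter hΩU hΩV) (hu.mono inter_subset_left)
      (hφ.mono inter_subset_right) hdiv hubd
  have hgrad : ContinuousOn (fun x => ‖gradient φ x‖ ^ 2) (WithLp.ofLp ⁻¹' Icc a b) :=
    ((hφ.continuousOn_gradient hV).mono hΩV).norm.pow 2
  have hmono : ∫ x in WithLp.ofLp ⁻¹' Icc a b, ‖gradient φ x‖ ^ 2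
      ≤ ∫ x in WithLp.ofLp ⁻¹' Icc a b, D x * ‖gradient φ x‖ ^ 2 :=
    setIntegral_mono_on (hgrad.integrableOn_compact hΩc)
      ((hD.continuousOn.mul hgrad).integrableOn_compact hΩc) hΩc.isClosed.measurableSet
      fun x hx => le_mul_of_one_le_left (sq_nonneg _) (hD1 x hx)
  rw [hconvection, zero_add]
  gcongr

/-- coercivity of `a^ε` w.r.t. `‖·‖_ε`: on a closed rectangular box
`Ω ⊂ ℝ²`, for a `C¹` divergence-free vector field `u` vanishing on `∂Ω`, `ε > 0`,
`π₁ > 0` and a continuous `D ≥ 1` on `Ω`, every `C¹` scalar field `φ` satisfies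
`∫_Ω (u·∇φ)φ + π₁ ∫_Ω D|∇φ|² + ε ∫_Ω φ² ≥ π₁ ∫_Ω |∇φ|² + ε ∫_Ω φ²`. -/
theorem stmt1 (a b : Fin 2 → ℝ) (hab : ∀ i, a i < b i)
    (Ω : Set (EuclideanSpace ℝ (Fin 2)))
    (hΩ : Ω = {x : EuclideanSpace ℝ (Fin 2) | ∀ i, x i ∈ Set.Icc (a i) (b i)})
    (U : Set (EuclideanSpace ℝ (Fin 2))) (hU : IsOpen U) (hΩU : Ω ⊆ U)
    (u : EuclideanSpace ℝ (Fin 2) → EuclideanSpace ℝ (Fin 2))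
    (hu : ContDiffOn ℝ 1 u U)
    (hdiv : ∀ x ∈ Ω, (∑ i, fderiv ℝ u x (EuclideanSpace.single i 1) i) = 0)
    (hubd : ∀ x ∈ frontier Ω, u x = 0)
    (ε π₁ : ℝ) (hε : 0 < ε) (hπ₁ : 0 < π₁)
    (D : EuclideanSpace ℝ (Fin 2) → ℝ) (hD : Continuous D)
    (hD1 : ∀ x ∈ Ω, 1 ≤ D x)
    (V : Set (EuclideanSpace ℝ (Fin 2))) (hV : IsOpen V) (hΩV : Ω ⊆ V)
    (φ : EuclideanSpace ℝ (Fin 2) → ℝ)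
    (hφ : ContDiffOn ℝ 1 φ V) :
    π₁ * (∫ x in Ω, ‖gradient φ x‖ ^ 2) + ε * (∫ x in Ω, (φ x) ^ 2) ≤
      (∫ x in Ω, (inner ℝ (u x) (gradient φ x) : ℝ) * φ x)
        + π₁ * (∫ x in Ω, D x * ‖gradient φ x‖ ^ 2)
        + ε * (∫ x in Ω, (φ x) ^ 2) :=
  stmt1_general a b hab Ω hΩ U hU hΩU u hu hdiv hubd ε π₁ hπ₁ D hD hD1 V hV hΩV φ hφ
end

section
/- Let Ω ⊂ ℝ² be a closed rectangular box with positive volume, let u : ℝ² → ℝ² be continuously differentiable on a neighborhood of Ω with div u = 0 on Ω and u = 0 on ∂Ω, let ε > 0 and π₁ > 0, and let D : ℝ² → ℝ be continuous with D ≥ 1 on Ω. Let c_Ω > 0 and let φ : ℝ² → ℝ be continuously differentiable on a neighborhood of Ω satisfying the Poincaré inequality ∫_Ω φ² dx ≤ c_Ω ∫_Ω |∇φ|² dx. Then a^ε(φ,φ) ≥ α_p ∫_Ω φ² dx with α_p = (π₁ + ε c_Ω)/c_Ω, i.e. ∫_Ω (u·∇φ)φ dx + π₁ ∫_Ω D |∇φ|²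 dx + ε ∫_Ω φ² dx ≥ ((π₁ + ε c_Ω)/c_Ω) ∫_Ω φ² dx. -/
/-!
The convection term vanishes: by the product rule `div (φ² u) = 2 φ (u · ∇φ) + φ² div u`, which
is `2 φ (u · ∇φ)` since `u` is divergence free, and the divergence theorem on the box turns its
integral into a boundary integral of `φ² u`, which is zero because `u = 0` on `∂Ω`. What remains is
`π₁ ∫ D |∇φ|² + ε ∫ φ² ≥ π₁ ∫ |∇φ|² + ε ∫ φ² ≥ (π₁ / c_Ω + ε) ∫ φ²`, by `D ≥ 1` and the Poincaré
inequality.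
-/

open MeasureTheory Set

theorem integral_divergence_Icc_eq_zero_of_eq_zero_on_frontier {E : Type*}
    [NormedAddCommGroup E] [NormedSpace ℝ E] [CompleteSpace E] {n : ℕ}
    {a b : Fin (n + 1) → ℝ} (hle : a ≤ b)
    {f : (Fin (n + 1) → ℝ) → Fin (n + 1) → E}
    {f' : (Fin (n + 1) → ℝ) → (Fin (n + 1) → ℝ) →L[ℝ] Fin (n + 1) → E}
    (hc : ContinuousOn f (Icc a b))
    (hd : ∀ x ∈ interior (Icc a b), HasFDerivAt f (f' x) x)
    (hi : IntegrableOn (fun x => ∑ i, f' x (Pi.single i 1) i) (Icc a b))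
    (hf : ∀ x ∈ frontier (Icc a b), f x = 0) :
    ∫ x in Icc a b, ∑ i, f' x (Pi.single i 1) i = 0 := by
  have hint : interior (Icc a b) = pi univ fun i => Ioo (a i) (b i) := by
    rw [← pi_univ_Icc, interior_pi_set finite_univ]
    simp only [interior_Icc]
  have hface : ∀ i, ∀ c ∈ ({a i, b i} : Set ℝ),
      ∀ x ∈ Icc (a ∘ i.succAbove) (b ∘ i.succAbove), f (i.insertNth c x) = 0 := by
    intro i c hc x hx
    apply hf
    refine ⟨subset_closure ⟨fun j => ?_, fun j => ?_⟩, fun hp => ?_⟩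
    · refine Fin.succAboveCases i ?_ (fun k => ?_) j
      · rcases hc with rfl | rfl <;> simp [hle i]
      · simpa using hx.1 k
    · refine Fin.succAboveCases i ?_ (fun k => ?_) j
      · rcases hc with rfl | rfl <;> simp [hle i]
      · simpa using hx.2 k
    · rw [hint] at hp
      have := hp i (mem_univ i)
      rcases hc with rfl | rfl <;> simp at this
  rw [integral_divergence_of_hasFDerivAt_off_countable a b hle f f' ∅ countable_empty hc
    (by simpa [← hint] using hd) hi]
  refine Finset.sum_eq_zero fun i _ => ?_
  rw [setIntegral_congr_fun measurableSet_Icc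
      (fun x hx => congrFun (hface i (b i) (by simp) x hx) i),
    setIntegral_congr_fun measurableSet_Icc
      (fun x hx => congrFun (hface i (a i) (by simp) x hx) i)]
  simp

def euclideanBox {ι : Type*} (a b : ι → ℝ) : Set (EuclideanSpace ℝ ι) :=
  {x | ∀ i, x i ∈ Icc (a i) (b i)}

noncomputable def divergence {ι : Type*} [Fintype ι] [DecidableEq ι]
    (F : EuclideanSpace ℝ ι → EuclideanSpace ℝ ι) (x : EuclideanSpace ℝ ι) : ℝ :=
  ∑ i, fderiv ℝ F x (EuclideanSpace.single i 1) i

section EuclideanBox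

variable {ι : Type*}

theorem euclideanBox_eq_preimage [Fintype ι] (a b : ι → ℝ) :
    euclideanBox a b = EuclideanSpace.equiv ι ℝ ⁻¹' Icc a b := by
  ext x
  simp [euclideanBox, Pi.le_def, forall_and]

theorem isCompact_euclideanBox [Fintype ι] (a b : ι → ℝ) : IsCompact (euclideanBox a b) := by
  rw [euclideanBox_eq_preimage, ← ContinuousLinearEquiv.coe_toHomeomorph,
    Homeomorph.isCompact_preimage]
  exact isCompact_Icc

theorem measurableSet_euclideanBox [Fintype ι] (a b : ι → ℝ) :
    MeasurableSet (euclideanBox a b) :=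
  (isCompact_euclideanBox a b).isClosed.measurableSet

end EuclideanBox

theorem ContDiffOn.continuousOn_gradient_s2 {F : Type*} [NormedAddCommGroup F]
    [InnerProductSpace ℝ F] [CompleteSpace F] {φ : F → ℝ} {V : Set F}
    (hφ : ContDiffOn ℝ 1 φ V) (hV : IsOpen V) : ContinuousOn (gradient φ) V :=
  (InnerProductSpace.toDual ℝ F).symm.continuous.comp_continuousOn
    (hφ.continuousOn_fderiv_of_isOpen hV le_rfl)

section Divergence

variable {ι : Type*} [Fintype ι] [DecidableEq ι]

theorem ContDiffOn.continuousOn_divergence {F : EuclideanSpace ℝ ι → EuclideanSpace ℝ ι}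
    {W : Set (EuclideanSpace ℝ ι)} (hF : ContDiffOn ℝ 1 F W) (hW : IsOpen W) :
    ContinuousOn (divergence F) W := by
  have hF' := hF.continuousOn_fderiv_of_isOpen hW le_rfl
  refine continuousOn_finsetSum _ fun i _ => ?_
  exact (EuclideanSpace.proj i).continuous.comp_continuousOn (hF'.clm_apply continuousOn_const)

theorem divergence_smul {ψ : EuclideanSpace ℝ ι → ℝ}
    {F : EuclideanSpace ℝ ι → EuclideanSpace ℝ ι} {x : EuclideanSpace ℝ ι}
    (hψ : DifferentiableAt ℝ ψ x) (hF : DifferentiableAt ℝ F x) :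
    divergence (fun y => ψ y • F y) x = fderiv ℝ ψ x (F x) + ψ x * divergence F x := by
  have hFx : F x = ∑ i, F x i • EuclideanSpace.single i (1 : ℝ) := by
    simpa using ((EuclideanSpace.basisFun ι ℝ).sum_repr (F x)).symm
  have hψF : fderiv ℝ ψ x (F x) = ∑ i, F x i * fderiv ℝ ψ x (EuclideanSpace.single i 1) := by
    conv_lhs => rw [hFx]
    simp
  rw [divergence, divergence, fderiv_fun_smul hψ hF, hψF, Finset.mul_sum, ← Finset.sum_add_distrib]
  simp [mul_comm, add_comm]

end Divergence

theorem integral_divergence_euclideanBox_eq_zero {n : ℕ} {a b : Fin (n + 1) → ℝ} (hle : a ≤ b)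
    {W : Set (EuclideanSpace ℝ (Fin (n + 1)))} (hW : IsOpen W) (hbox : euclideanBox a b ⊆ W)
    {F : EuclideanSpace ℝ (Fin (n + 1)) → EuclideanSpace ℝ (Fin (n + 1))}
    (hF : ContDiffOn ℝ 1 F W) (hF0 : ∀ x ∈ frontier (euclideanBox a b), F x = 0) :
    ∫ x in euclideanBox a b, divergence F x = 0 := by
  set e := EuclideanSpace.equiv (Fin (n + 1)) ℝ
  have hmaps : MapsTo e.symm (Icc a b) W := fun y hy => hbox (by
    rwa [euclideanBox_eq_preimage, mem_preimage, e.apply_symm_apply])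
  have hfrontier : ∀ y ∈ frontier (Icc a b), e.symm y ∈ frontier (euclideanBox a b) := by
    intro y hy
    rwa [euclideanBox_eq_preimage, ← ContinuousLinearEquiv.coe_toHomeomorph,
      ← Homeomorph.preimage_frontier, mem_preimage, ContinuousLinearEquiv.coe_toHomeomorph,
      e.apply_symm_apply]
  have hd : ∀ y ∈ Icc a b, HasFDerivAt F (fderiv ℝ F (e.symm y)) (e.symm y) := fun y hy =>
    ((hF.contDiffAt (hW.mem_nhds (hmaps hy))).differentiableAt one_ne_zero).hasFDerivAt
  calc ∫ x in euclideanBox a b, divergence F x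
      = ∫ y in Icc a b, divergence F (e.symm y) := by
        rw [euclideanBox_eq_preimage]
        exact (EuclideanSpace.volume_preserving_symm_measurableEquiv_toLp (Fin (n + 1)))
          |>.setIntegral_preimage_emb (E := ℝ)
            (MeasurableEquiv.toLp 2 (Fin (n + 1) → ℝ)).symm.measurableEmbedding
            (fun y => divergence F (e.symm y)) (Icc a b)
    _ = 0 := integral_divergence_Icc_eq_zero_of_eq_zero_on_frontier hle
        (f := fun y => e (F (e.symm y)))
        (f' := fun y =>
          e.toContinuousLinearMap ∘L fderiv ℝ F (e.symm y) ∘L e.symm.toContinuousLinearMap)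
        (e.continuous.comp_continuousOn (hF.continuousOn.comp e.symm.continuousOn hmaps))
        (fun y hy => e.hasFDerivAt.comp y ((hd y (interior_subset hy)).comp y e.symm.hasFDerivAt))
        (((hF.continuousOn_divergence hW).comp e.symm.continuousOn hmaps).integrableOn_Icc)
        (fun y hy => by simp [hF0 _ (hfrontier y hy)])

theorem integral_inner_gradient_mul_self_eq_zero {n : ℕ} {a b : Fin (n + 1) → ℝ} (hle : a ≤ b)
    {W : Set (EuclideanSpace ℝ (Fin (n + 1)))} (hW : IsOpen W) (hbox : euclideanBox a b ⊆ W)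
    {u : EuclideanSpace ℝ (Fin (n + 1)) → EuclideanSpace ℝ (Fin (n + 1))}
    {φ : EuclideanSpace ℝ (Fin (n + 1)) → ℝ} (hu : ContDiffOn ℝ 1 u W) (hφ : ContDiffOn ℝ 1 φ W)
    (hdiv : ∀ x ∈ euclideanBox a b, divergence u x = 0)
    (hu0 : ∀ x ∈ frontier (euclideanBox a b), u x = 0) :
    ∫ x in euclideanBox a b, inner ℝ (u x) (gradient φ x) * φ x = 0 := by
  have hdiv_sq : ∀ x ∈ euclideanBox a b,
      divergence (fun y => φ y ^ 2 • u y) x = 2 * (inner ℝ (u x) (gradient φ x) * φ x) := by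
    intro x hx
    have hφx := (hφ.contDiffAt (hW.mem_nhds (hbox hx))).differentiableAt one_ne_zero
    have hux := (hu.contDiffAt (hW.mem_nhds (hbox hx))).differentiableAt one_ne_zero
    rw [divergence_smul (hφx.fun_pow 2) hux, hdiv x hx, fderiv_fun_pow 2 hφx, real_inner_comm,
      inner_gradient_left]
    simp only [FunLike.coe_smul, Pi.smul_apply, smul_eq_mul, mul_zero, add_zero]
    ring
  have h := integral_divergence_euclideanBox_eq_zero hle hW hbox
    (F := fun y => φ y ^ 2 • u y) ((hφ.pow 2).smul hu)
    (fun x hx => by simp [hu0 x hx])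
  rwa [setIntegral_congr_fun (measurableSet_euclideanBox a b) hdiv_sq, integral_const_mul,
    mul_eq_zero, or_iff_right two_ne_zero] at h

theorem stmt2_general (a b : Fin 2 → ℝ) (hab : ∀ i, a i < b i)
    (Ω : Set (EuclideanSpace ℝ (Fin 2)))
    (hΩ : Ω = {x : EuclideanSpace ℝ (Fin 2) | ∀ i, x i ∈ Set.Icc (a i) (b i)})
    (U : Set (EuclideanSpace ℝ (Fin 2))) (hU : IsOpen U) (hΩU : Ω ⊆ U)
    (u : EuclideanSpace ℝ (Fin 2) → EuclideanSpace ℝ (Fin 2))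
    (hu : ContDiffOn ℝ 1 u U)
    (hdiv : ∀ x ∈ Ω, (∑ i, fderiv ℝ u x (EuclideanSpace.single i 1) i) = 0)
    (hubd : ∀ x ∈ frontier Ω, u x = 0)
    (ε π₁ : ℝ) (hπ₁ : 0 < π₁)
    (D : EuclideanSpace ℝ (Fin 2) → ℝ) (hD : Continuous D)
    (hD1 : ∀ x ∈ Ω, 1 ≤ D x)
    (cΩ : ℝ) (hcΩ : 0 < cΩ)
    (V : Set (EuclideanSpace ℝ (Fin 2))) (hV : IsOpen V) (hΩV : Ω ⊆ V)
    (φ : EuclideanSpace ℝ (Fin 2) → ℝ)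
    (hφ : ContDiffOn ℝ 1 φ V)
    (hPoincare : (∫ x in Ω, (φ x) ^ 2) ≤ cΩ * (∫ x in Ω, ‖gradient φ x‖ ^ 2)) :
    ((π₁ + ε * cΩ) / cΩ) * (∫ x in Ω, (φ x) ^ 2) ≤
      (∫ x in Ω, (inner ℝ (u x) (gradient φ x) : ℝ) * φ x)
        + π₁ * (∫ x in Ω, D x * ‖gradient φ x‖ ^ 2)
        + ε * (∫ x in Ω, (φ x) ^ 2) := by
  change Ω = euclideanBox a b at hΩ
  subst hΩ
  have hconv := integral_inner_gradient_mul_self_eq_zero (fun i => (hab i).le) (hU.inter hV)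
    (subset_inter hΩU hΩV) (hu.mono inter_subset_left) (hφ.mono inter_subset_right) hdiv hubd
  have hgrad_sq : ContinuousOn (fun x => ‖gradient φ x‖ ^ 2) (euclideanBox a b) :=
    ((hφ.continuousOn_gradient_s2 hV).norm.pow 2).mono hΩV
  have hweight : ∫ x in euclideanBox a b, ‖gradient φ x‖ ^ 2
      ≤ ∫ x in euclideanBox a b, D x * ‖gradient φ x‖ ^ 2 :=
    setIntegral_mono_on (hgrad_sq.integrableOn_compact (isCompact_euclideanBox a b))
      ((hD.continuousOn.mul hgrad_sq).integrableOn_compact (isCompact_euclideanBox a b))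
      (measurableSet_euclideanBox a b)
      fun x hx => le_mul_of_one_le_left (by positivity) (hD1 x hx)
  calc (π₁ + ε * cΩ) / cΩ * ∫ x in euclideanBox a b, φ x ^ 2
      = π₁ * ((∫ x in euclideanBox a b, φ x ^ 2) / cΩ) + ε * ∫ x in euclideanBox a b, φ x ^ 2 := by
        field_simp
    _ ≤ π₁ * (∫ x in euclideanBox a b, D x * ‖gradient φ x‖ ^ 2)
          + ε * ∫ x in euclideanBox a b, φ x ^ 2 := by
        gcongr
        exact ((div_le_iff₀' hcΩ).2 hPoincare).trans hweight
    _ = _ := by rw [hconv, zero_add]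

/-- L² coercivity of `a^ε`: under the same hypotheses as Statement 1,
if moreover `φ` satisfies the Poincaré inequality `∫_Ω φ² ≤ c_Ω ∫_Ω |∇φ|²` with
`c_Ω > 0`, then `a^ε(φ,φ) ≥ ((π₁ + ε c_Ω)/c_Ω) ∫_Ω φ²`. -/
theorem stmt2 (a b : Fin 2 → ℝ) (hab : ∀ i, a i < b i)
    (Ω : Set (EuclideanSpace ℝ (Fin 2)))
    (hΩ : Ω = {x : EuclideanSpace ℝ (Fin 2) | ∀ i, x i ∈ Set.Icc (a i) (b i)})
    (U : Set (EuclideanSpace ℝ (Fin 2))) (hU : IsOpen U) (hΩU : Ω ⊆ U)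
    (u : EuclideanSpace ℝ (Fin 2) → EuclideanSpace ℝ (Fin 2))
    (hu : ContDiffOn ℝ 1 u U)
    (hdiv : ∀ x ∈ Ω, (∑ i, fderiv ℝ u x (EuclideanSpace.single i 1) i) = 0)
    (hubd : ∀ x ∈ frontier Ω, u x = 0)
    (ε π₁ : ℝ) (hε : 0 < ε) (hπ₁ : 0 < π₁)
    (D : EuclideanSpace ℝ (Fin 2) → ℝ) (hD : Continuous D)
    (hD1 : ∀ x ∈ Ω, 1 ≤ D x)
    (cΩ : ℝ) (hcΩ : 0 < cΩ)
    (V : Set (EuclideanSpace ℝ (Fin 2))) (hV : IsOpen V) (hΩV : Ω ⊆ V)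
    (φ : EuclideanSpace ℝ (Fin 2) → ℝ)
    (hφ : ContDiffOn ℝ 1 φ V)
    (hPoincare : (∫ x in Ω, (φ x) ^ 2) ≤ cΩ * (∫ x in Ω, ‖gradient φ x‖ ^ 2)) :
    ((π₁ + ε * cΩ) / cΩ) * (∫ x in Ω, (φ x) ^ 2) ≤
      (∫ x in Ω, (inner ℝ (u x) (gradient φ x) : ℝ) * φ x)
        + π₁ * (∫ x in Ω, D x * ‖gradient φ x‖ ^ 2)
        + ε * (∫ x in Ω, (φ x) ^ 2) :=
  stmt2_general a b hab Ω hΩ U hU hΩU u hu hdiv hubd ε π₁ hπ₁ D hD hD1 cΩ hcΩ V hV hΩV φ hφ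
    hPoincare
end

section
/- Let Ω ⊂ ℝ² be a closed rectangular box with positive volume, let u : ℝ² → ℝ² be continuously differentiable on a neighborhood of Ω with div u = 0 on Ω and u = 0 on ∂Ω, let ε > 0, π₁ > 0, and let D : ℝ² → ℝ be continuously differentiable with D ≥ 1 on Ω. Let Ω₁,…,Ω_m be pairwise disjoint measurable subsets whose union is Ω, and for each e let h_e > 0 be the local mesh size, C_inv > 0, and let the SUPG weight δ_e ≥ 0 satisfy δ_e ≤ 1/(2ε) and δ_e ≤ h_e² / (2 π₁ C_inv² (sup_{Ω_e} D)²). Let φ : ℝ² → ℝ be twice continuously differentiable on a neighborhood of Ω and satisfy, for each e, the inverse-type estimate ( ∫_{Ω_e} |∇·(D∇φ)|² dx )^{1/2} ≤ (C_inv (sup_{Ω_e} D) / h_e) ( ∫_{Ω_e} |∇φ|² dx )^{1/2}. Then the SUPG bilinear form is coercive with constant 1/2: a^ε_supg(φ,φ) ≥ (1/2) ‖φ‖_supg², where a^ε_supg(φ,φ) = ∫_Ω (u·∇φ)φ dx + π₁ ∫_Ω D |∇φ|² dx + ε ∫_Ω φ² dx + Σ_e δ_e ∫_{Ω_e} (u·∇φ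 + εφ − π₁ ∇·(D∇φ)) (u·∇φ) dx and ‖φ‖_supg² = π₁ ∫_Ω |∇φ|² dx + ε ∫_Ω φ² dx + Σ_e δ_e ∫_{Ω_e} (u·∇φ)² dx. -/
open MeasureTheory

/-- Pointwise divergence of a vector field on `ℝ² = EuclideanSpace ℝ (Fin 2)`. -/
noncomputable def vdiv (w : EuclideanSpace ℝ (Fin 2) → EuclideanSpace ℝ (Fin 2))
    (x : EuclideanSpace ℝ (Fin 2)) : ℝ :=
  ∑ i, fderiv ℝ w x (EuclideanSpace.single i 1) i

/-!
Since `div u = 0`, one has `div (φ² u) = 2 φ (u·∇φ)`, so the divergence theorem on the box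
together with `u = 0` on `∂Ω` kills the convection term `∫_Ω (u·∇φ) φ`. What remains is local
to each element. By Young's inequality the SUPG term is at least
`δ (½‖u·∇φ‖² - ε²‖φ‖² - π₁²‖∇·(D∇φ)‖²)`; the bound `δ ≤ 1/(2ε)` absorbs the middle term
into `ε‖φ‖²`, and the inverse estimate with `δ ≤ h²/(2π₁C²(sup D)²)` absorbs the last one
into `½ π₁‖∇φ‖² ≤ ½ π₁ ∫ D |∇φ|²`.
-/

open Set

lemma insertNth_mem_frontier_Icc {n : ℕ} {a b : Fin (n + 1) → ℝ} (hab : a ≤ b)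
    {i : Fin (n + 1)} {c : ℝ} (hcab : c = a i ∨ c = b i) {y : Fin n → ℝ}
    (hy : y ∈ Icc (a ∘ i.succAbove) (b ∘ i.succAbove)) :
    i.insertNth c y ∈ frontier (Icc a b) := by
  have hc : c ∈ Icc (a i) (b i) := by rcases hcab with rfl | rfl <;> simp [hab i]
  rw [isClosed_Icc.frontier_eq, ← pi_univ_Icc, interior_pi_set finite_univ]
  refine ⟨pi_univ_Icc a b ▸ Fin.insertNth_mem_Icc.2 ⟨hc, hy⟩, fun h => ?_⟩
  have := h i (mem_univ i)
  simp only [Fin.insertNth_apply_same, interior_Icc] at this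
  rcases hcab with rfl | rfl
  · exact this.1.false
  · exact this.2.false

theorem integral_divergence_eq_zero_of_eq_zero_on_frontier {n : ℕ} {a b : Fin (n + 1) → ℝ}
    (hab : a ≤ b) {W : Set (Fin (n + 1) → ℝ)} (hW : IsOpen W) (hsub : Icc a b ⊆ W)
    {f : Fin (n + 1) → (Fin (n + 1) → ℝ) → ℝ} (hf : ∀ i, ContDiffOn ℝ 1 (f i) W)
    (hbd : ∀ i, ∀ x ∈ frontier (Icc a b), f i x = 0) :
    ∫ x in Icc a b, ∑ i, fderiv ℝ (f i) x (Pi.single i 1) = 0 := by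
  have hderiv : ∀ i, ∀ x ∈ W, HasFDerivAt (f i) (fderiv ℝ (f i) x) x := fun i x hx =>
    ((hf i).differentiableOn one_ne_zero x hx).differentiableAt (hW.mem_nhds hx) |>.hasFDerivAt
  have hint : IntegrableOn (fun x => ∑ i, fderiv ℝ (f i) x (Pi.single i 1)) (Icc a b) := by
    refine ContinuousOn.integrableOn_compact isCompact_Icc
      (continuousOn_finsetSum _ fun i _ => ?_)
    exact ((hf i).continuousOn_fderiv_of_isOpen hW le_rfl).clm_apply continuousOn_const
      |>.mono hsub
  rw [integral_divergence_of_hasFDerivAt_off_countable' a b hab f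
    (fun i x => fderiv ℝ (f i) x) ∅ countable_empty (fun i => (hf i).continuousOn.mono hsub)
    (fun x hx i => hderiv i x (hsub ?_)) hint]
  · refine Finset.sum_eq_zero fun i _ => ?_
    rw [setIntegral_eq_zero_of_forall_eq_zero, setIntegral_eq_zero_of_forall_eq_zero, sub_zero]
    all_goals
      intro y hy
      exact hbd i _ (insertNth_mem_frontier_Icc hab (by simp) hy)
  · rw [← pi_univ_Icc]
    exact pi_mono (fun i _ => Ioo_subset_Icc_self) hx.1

lemma setOf_forall_mem_Icc_eq_preimage {ι : Type*} (a b : ι → ℝ) :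
    {x : EuclideanSpace ℝ ι | ∀ i, x i ∈ Icc (a i) (b i)} = WithLp.ofLp ⁻¹' Icc a b := by
  ext x
  simp [Pi.le_def, forall_and]

theorem setIntegral_vdiv_eq_zero {a b : Fin 2 → ℝ} (hab : a ≤ b)
    {W : Set (EuclideanSpace ℝ (Fin 2))} (hW : IsOpen W) (hsub : WithLp.ofLp ⁻¹' Icc a b ⊆ W)
    {w : EuclideanSpace ℝ (Fin 2) → EuclideanSpace ℝ (Fin 2)} (hw : ContDiffOn ℝ 1 w W)
    (hbd : ∀ x ∈ frontier (WithLp.ofLp ⁻¹' Icc a b), w x = 0) :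
    ∫ x in WithLp.ofLp ⁻¹' Icc a b, vdiv w x = 0 := by
  let e := PiLp.continuousLinearEquiv 2 ℝ fun _ : Fin 2 => ℝ
  let f : Fin 2 → (Fin 2 → ℝ) → ℝ := fun i y => w (e.symm y) i
  have hf : ∀ i, ContDiffOn ℝ 1 (f i) (e.symm ⁻¹' W) := fun i =>
    show ContDiffOn ℝ 1 (EuclideanSpace.proj i ∘ w ∘ e.symm) _ from
      (EuclideanSpace.proj i).contDiff.comp_contDiffOn
        (hw.comp e.symm.contDiff.contDiffOn (mapsTo_preimage _ _))
  have hdiv : ∀ y ∈ Icc a b, vdiv w (e.symm y) = ∑ i, fderiv ℝ (f i) y (Pi.single i 1) := by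
    intro y hy
    have hwd : HasFDerivAt w (fderiv ℝ w (e.symm y)) (e.symm y) :=
      ((hw.differentiableOn one_ne_zero _ (hsub hy)).differentiableAt
        (hW.mem_nhds (hsub hy))).hasFDerivAt
    refine Finset.sum_congr rfl fun i _ => ?_
    have hfd : HasFDerivAt (f i)
        (((EuclideanSpace.proj i).comp (fderiv ℝ w (e.symm y))).comp e.symm.toContinuousLinearMap)
        y :=
      (EuclideanSpace.proj i : EuclideanSpace ℝ (Fin 2) →L[ℝ] ℝ).hasFDerivAt.comp y
        (hwd.comp y e.symm.hasFDerivAt)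
    rw [hfd.fderiv]
    simp [e, PiLp.toLp_single]
  have hvol : ∫ y in Icc a b, vdiv w (e.symm y) = ∫ x in WithLp.ofLp ⁻¹' Icc a b, vdiv w x :=
    (EuclideanSpace.volume_preserving_symm_measurableEquiv_toLp (Fin 2)).symm
      |>.setIntegral_preimage_emb (MeasurableEquiv.toLp 2 (Fin 2 → ℝ)).measurableEmbedding
        (vdiv w) (WithLp.ofLp ⁻¹' Icc a b)
  rw [← hvol, setIntegral_congr_fun measurableSet_Icc hdiv]
  refine integral_divergence_eq_zero_of_eq_zero_on_frontier hab
    (hW.preimage e.symm.continuous) (fun y hy => hsub hy) hf fun i y hy => ?_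
  have : e.symm y ∈ frontier (WithLp.ofLp ⁻¹' Icc a b) := by
    rw [show WithLp.ofLp ⁻¹' Icc a b = e.toHomeomorph ⁻¹' Icc a b from rfl,
      ← e.toHomeomorph.preimage_frontier]
    simpa only [mem_preimage, ContinuousLinearEquiv.coe_toHomeomorph,
      ContinuousLinearEquiv.apply_symm_apply] using hy
  simp [f, hbd _ this]

lemma vdiv_smul {g : EuclideanSpace ℝ (Fin 2) → ℝ}
    {w : EuclideanSpace ℝ (Fin 2) → EuclideanSpace ℝ (Fin 2)} {x : EuclideanSpace ℝ (Fin 2)}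
    (hg : DifferentiableAt ℝ g x) (hw : DifferentiableAt ℝ w x) :
    vdiv (fun y => g y • w y) x = g x * vdiv w x + fderiv ℝ g x (w x) := by
  have hsum := (EuclideanSpace.basisFun (Fin 2) ℝ).sum_repr (w x)
  conv_rhs => rw [← hsum]
  simp only [vdiv]
  rw [fderiv_fun_smul hg hw]
  simp [Finset.sum_add_distrib, mul_add, mul_comm]

theorem setIntegral_inner_gradient_mul_self_eq_zero {a b : Fin 2 → ℝ} (hab : a ≤ b)
    {W : Set (EuclideanSpace ℝ (Fin 2))} (hW : IsOpen W) (hsub : WithLp.ofLp ⁻¹' Icc a b ⊆ W)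
    {u : EuclideanSpace ℝ (Fin 2) → EuclideanSpace ℝ (Fin 2)} (hu : ContDiffOn ℝ 1 u W)
    (hdiv : ∀ x ∈ WithLp.ofLp ⁻¹' Icc a b, vdiv u x = 0)
    (hubd : ∀ x ∈ frontier (WithLp.ofLp ⁻¹' Icc a b), u x = 0)
    {φ : EuclideanSpace ℝ (Fin 2) → ℝ} (hφ : ContDiffOn ℝ 1 φ W) :
    ∫ x in WithLp.ofLp ⁻¹' Icc a b, inner ℝ (u x) (gradient φ x) * φ x = 0 := by
  have hvdiv : ∀ x ∈ WithLp.ofLp ⁻¹' Icc a b,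
      vdiv (fun y => φ y ^ 2 • u y) x = 2 * (inner ℝ (u x) (gradient φ x) * φ x) := by
    intro x hx
    have hφx := (hφ.differentiableOn one_ne_zero x (hsub hx)).differentiableAt
      (hW.mem_nhds (hsub hx))
    have hux := (hu.differentiableOn one_ne_zero x (hsub hx)).differentiableAt
      (hW.mem_nhds (hsub hx))
    rw [vdiv_smul (hφx.fun_pow 2) hux, hdiv x hx, (hφx.hasFDerivAt.pow 2).fderiv,
      inner_gradient_right]
    simp only [mul_zero, zero_add, Nat.add_one_sub_one, pow_one, nsmul_eq_mul, Nat.cast_ofNat,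
      smul_apply, smul_eq_mul, Real.ringHom_apply]
    ring
  have hzero := setIntegral_vdiv_eq_zero (w := fun y => φ y ^ 2 • u y) hab hW hsub
    ((hφ.pow 2).smul hu) fun x hx => by simp [hubd x hx]
  rw [setIntegral_congr_fun (measurableSet_Icc.preimage (WithLp.measurable_ofLp _ _)) hvdiv,
    integral_const_mul] at hzero
  simpa using hzero

lemma ContDiffOn.gradient {F : Type*} [NormedAddCommGroup F] [InnerProductSpace ℝ F]
    [CompleteSpace F] {f : F → ℝ} {s : Set F} {n : WithTop ℕ∞} (hf : ContDiffOn ℝ (n + 1) f s)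
    (hs : IsOpen s) : ContDiffOn ℝ n (gradient f) s :=
  (InnerProductSpace.toDual ℝ F).symm.toContinuousLinearEquiv.contDiff.comp_contDiffOn
    (hf.fderiv_of_isOpen hs le_rfl)

lemma ContDiffOn.continuousOn_vdiv {w : EuclideanSpace ℝ (Fin 2) → EuclideanSpace ℝ (Fin 2)}
    {W : Set (EuclideanSpace ℝ (Fin 2))} (hw : ContDiffOn ℝ 1 w W) (hW : IsOpen W) :
    ContinuousOn (vdiv w) W :=
  continuousOn_finsetSum _ fun i _ => (EuclideanSpace.proj i).continuous.comp_continuousOn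
    ((hw.continuousOn_fderiv_of_isOpen hW le_rfl).clm_apply continuousOn_const)

lemma ContinuousOn.memLp_restrict {X E : Type*} [TopologicalSpace X] [MeasurableSpace X]
    [OpensMeasurableSpace X] [T2Space X] [NormedAddCommGroup E]
    [SecondCountableTopologyEither X E] {μ : Measure X} [IsFiniteMeasureOnCompacts μ]
    {f : X → E} {K s : Set X}
    (hf : ContinuousOn f K) (hK : IsCompact K) (hs : s ⊆ K) (p : ENNReal) :
    MemLp f p (μ.restrict s) := by
  obtain ⟨C, hC⟩ := hK.exists_bound_of_continuousOn hf
  have : IsFiniteMeasure (μ.restrict K) := isFiniteMeasure_restrict.2 hK.measure_lt_top.ne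
  have hf_top : MemLp f ⊤ (μ.restrict K) := memLp_top_of_bound
    (hf.aestronglyMeasurable hK.measurableSet) C (ae_restrict_of_forall_mem hK.measurableSet hC)
  exact (hf_top.mono_exponent le_top).mono_measure (Measure.restrict_mono hs le_rfl)

section LocalCoercivity

variable {X : Type*} [MeasurableSpace X] {μ : Measure X}

lemma supg_residual_mul_ge (p f l ε π₁ : ℝ) :
    p ^ 2 / 2 - ε ^ 2 * f ^ 2 - π₁ ^ 2 * l ^ 2 ≤ (p + ε * f - π₁ * l) * p := by
  nlinarith [sq_nonneg (p / 2 + ε * f), sq_nonneg (p / 2 - π₁ * l)]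

lemma integral_supg_residual_mul_ge {φ p l : X → ℝ} (ε π₁ : ℝ) (hφ : MemLp φ 2 μ)
    (hp : MemLp p 2 μ) (hl : MemLp l 2 μ) :
    (∫ x, p x ^ 2 ∂μ) / 2 - ε ^ 2 * (∫ x, φ x ^ 2 ∂μ) - π₁ ^ 2 * (∫ x, l x ^ 2 ∂μ) ≤
      ∫ x, (p x + ε * φ x - π₁ * l x) * p x ∂μ := by
  have hres : Integrable (fun x => (p x + ε * φ x - π₁ * l x) * p x) μ :=
    ((hp.add (hφ.const_mul ε)).sub (hl.const_mul π₁)).integrable_mul hp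
  rw [← integral_div, ← integral_const_mul, ← integral_const_mul,
    ← integral_sub (hp.integrable_sq.div_const 2) (hφ.integrable_sq.const_mul _),
    ← integral_sub _ (hl.integrable_sq.const_mul _)]
  · exact integral_mono (((hp.integrable_sq.div_const 2).sub
      (hφ.integrable_sq.const_mul _)).sub (hl.integrable_sq.const_mul _)) hres
      fun x => supg_residual_mul_ge _ _ _ _ _
  · exact (hp.integrable_sq.div_const 2).sub (hφ.integrable_sq.const_mul _)

lemma mul_sq_le_half_of_sqrt_le {δ π₁ c s t : ℝ} (hπ₁ : 0 < π₁) (hδ0 : 0 ≤ δ)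
    (hδ : δ ≤ 1 / (2 * π₁ * c ^ 2)) (ht : 0 ≤ t) (hst : √s ≤ c * √t) :
    δ * π₁ ^ 2 * s ≤ π₁ * t / 2 := by
  have hs : s ≤ c ^ 2 * t := by
    simpa only [mul_pow, Real.sq_sqrt ht] using (Real.sqrt_le_iff.mp hst).2
  rcases eq_or_ne c 0 with rfl | hc
  · calc δ * π₁ ^ 2 * s ≤ 0 := mul_nonpos_of_nonneg_of_nonpos (by positivity) (by simpa using hs)
      _ ≤ π₁ * t / 2 := by positivity
  · have hδc : δ * (2 * π₁ * c ^ 2) ≤ 1 := by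
      rwa [le_div_iff₀ (by positivity)] at hδ
    calc δ * π₁ ^ 2 * s ≤ δ * π₁ ^ 2 * (c ^ 2 * t) :=
          mul_le_mul_of_nonneg_left hs (by positivity)
      _ = δ * (2 * π₁ * c ^ 2) * (π₁ * t / 2) := by ring
      _ ≤ 1 * (π₁ * t / 2) := mul_le_mul_of_nonneg_right hδc (by positivity)
      _ = π₁ * t / 2 := one_mul _

theorem supg_coercivity_of_inverse_estimate {φ p l g D : X → ℝ} {ε π₁ δ c : ℝ} (hε : 0 < ε)
    (hπ₁ : 0 < π₁) (hδ0 : 0 ≤ δ) (hδε : δ ≤ 1 / (2 * ε)) (hδc : δ ≤ 1 / (2 * π₁ * c ^ 2))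
    (hφ : MemLp φ 2 μ) (hp : MemLp p 2 μ) (hl : MemLp l 2 μ) (hg : MemLp g 2 μ)
    (hDg : Integrable (fun x => D x * g x ^ 2) μ) (hD : ∀ᵐ x ∂μ, 1 ≤ D x)
    (hinv : √(∫ x, l x ^ 2 ∂μ) ≤ c * √(∫ x, g x ^ 2 ∂μ)) :
    1 / 2 * (π₁ * (∫ x, g x ^ 2 ∂μ) + ε * (∫ x, φ x ^ 2 ∂μ) + δ * ∫ x, p x ^ 2 ∂μ) ≤
      π₁ * (∫ x, D x * g x ^ 2 ∂μ) + ε * (∫ x, φ x ^ 2 ∂μ)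
        + δ * ∫ x, (p x + ε * φ x - π₁ * l x) * p x ∂μ := by
  have hgD : ∫ x, g x ^ 2 ∂μ ≤ ∫ x, D x * g x ^ 2 ∂μ :=
    integral_mono_ae hg.integrable_sq hDg <| hD.mono fun x hx =>
      le_mul_of_one_le_left (sq_nonneg _) hx
  have hres := mul_le_mul_of_nonneg_left (integral_supg_residual_mul_ge ε π₁ hφ hp hl) hδ0
  have hδε' : δ * ε ≤ 1 / 2 := by
    rw [le_div_iff₀ (by positivity)] at hδε
    linarith
  have hdiff :=
    mul_sq_le_half_of_sqrt_le hπ₁ hδ0 hδc (integral_nonneg fun x => sq_nonneg (g x)) hinv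
  have hφ2 := mul_le_mul_of_nonneg_right hδε'
    (mul_nonneg hε.le (integral_nonneg fun x => sq_nonneg (φ x) : 0 ≤ ∫ x, φ x ^ 2 ∂μ))
  linarith [mul_le_mul_of_nonneg_left hgD hπ₁.le]

end LocalCoercivity

theorem stmt3_general (a b : Fin 2 → ℝ) (hab : ∀ i, a i < b i)
    (Ω : Set (EuclideanSpace ℝ (Fin 2)))
    (hΩ : Ω = {x : EuclideanSpace ℝ (Fin 2) | ∀ i, x i ∈ Set.Icc (a i) (b i)})
    (U : Set (EuclideanSpace ℝ (Fin 2))) (hU : IsOpen U) (hΩU : Ω ⊆ U)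
    (u : EuclideanSpace ℝ (Fin 2) → EuclideanSpace ℝ (Fin 2))
    (hu : ContDiffOn ℝ 1 u U)
    (hdiv : ∀ x ∈ Ω, vdiv u x = 0)
    (hubd : ∀ x ∈ frontier Ω, u x = 0)
    (ε π₁ : ℝ) (hε : 0 < ε) (hπ₁ : 0 < π₁)
    (D : EuclideanSpace ℝ (Fin 2) → ℝ) (hD : ContDiff ℝ 1 D)
    (hD1 : ∀ x ∈ Ω, 1 ≤ D x)
    (m : ℕ) (Ωe : Fin m → Set (EuclideanSpace ℝ (Fin 2)))
    (hmeas : ∀ e, MeasurableSet (Ωe e))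
    (hdisj : Pairwise (Function.onFun Disjoint Ωe))
    (hcover : (⋃ e, Ωe e) = Ω)
    (h : Fin m → ℝ)
    (Cinv : ℝ)
    (δ : Fin m → ℝ) (hδ0 : ∀ e, 0 ≤ δ e)
    (hδ1 : ∀ e, δ e ≤ 1 / (2 * ε))
    (hδ2 : ∀ e, δ e ≤ (h e) ^ 2 / (2 * π₁ * Cinv ^ 2 * (sSup (D '' Ωe e)) ^ 2))
    (V : Set (EuclideanSpace ℝ (Fin 2))) (hV : IsOpen V) (hΩV : Ω ⊆ V)
    (φ : EuclideanSpace ℝ (Fin 2) → ℝ)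
    (hφ : ContDiffOn ℝ 2 φ V)
    (hinv : ∀ e, Real.sqrt (∫ x in Ωe e, (vdiv (fun y => D y • gradient φ y) x) ^ 2)
      ≤ (Cinv * sSup (D '' Ωe e) / h e) *
        Real.sqrt (∫ x in Ωe e, ‖gradient φ x‖ ^ 2)) :
    (1 / 2) * (π₁ * (∫ x in Ω, ‖gradient φ x‖ ^ 2) + ε * (∫ x in Ω, (φ x) ^ 2)
        + ∑ e, δ e * (∫ x in Ωe e, ((inner ℝ (u x) (gradient φ x) : ℝ)) ^ 2)) ≤
      (∫ x in Ω, (inner ℝ (u x) (gradient φ x) : ℝ) * φ x)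
        + π₁ * (∫ x in Ω, D x * ‖gradient φ x‖ ^ 2)
        + ε * (∫ x in Ω, (φ x) ^ 2)
        + ∑ e, δ e * (∫ x in Ωe e,
            ((inner ℝ (u x) (gradient φ x) : ℝ) + ε * φ x
              - π₁ * vdiv (fun y => D y • gradient φ y) x)
            * (inner ℝ (u x) (gradient φ x) : ℝ)) := by
  rw [setOf_forall_mem_Icc_eq_preimage] at hΩ
  subst hΩ
  have hK : IsCompact (WithLp.ofLp ⁻¹' Icc a b : Set (EuclideanSpace ℝ (Fin 2))) :=
    (PiLp.continuousLinearEquiv 2 ℝ _).toHomeomorph.isCompact_preimage.2 isCompact_Icc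
  have hKW := subset_inter hΩU hΩV
  have hsub : ∀ e, Ωe e ⊆ WithLp.ofLp ⁻¹' Icc a b := fun e => hcover ▸ subset_iUnion Ωe e
  have hgrad : ContDiffOn ℝ 1 (gradient φ) V := hφ.gradient hV
  have hP : ContinuousOn (fun x => inner ℝ (u x) (gradient φ x)) (U ∩ V) :=
    (hu.continuousOn.mono inter_subset_left).inner (hgrad.continuousOn.mono inter_subset_right)
  have hL : ContinuousOn (vdiv fun y => D y • gradient φ y) (U ∩ V) :=
    ((hD.contDiffOn.smul hgrad).continuousOn_vdiv hV).mono inter_subset_right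
  have hcφ : ContinuousOn φ (U ∩ V) := hφ.continuousOn.mono inter_subset_right
  have hcg : ContinuousOn (fun x => ‖gradient φ x‖) (U ∩ V) :=
    (hgrad.continuousOn.mono inter_subset_right).norm
  have hcDg : ContinuousOn (fun x => D x * ‖gradient φ x‖ ^ 2) (U ∩ V) :=
    hD.continuous.continuousOn.mul (hcg.pow 2)
  have hmemLp : ∀ {f : EuclideanSpace ℝ (Fin 2) → ℝ}, ContinuousOn f (U ∩ V) → ∀ e p,
      MemLp f p (volume.restrict (Ωe e)) := fun hf e =>
    (hf.mono hKW).memLp_restrict hK (hsub e)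
  have hpart : ∀ {f : EuclideanSpace ℝ (Fin 2) → ℝ}, ContinuousOn f (U ∩ V) →
      ∫ x in WithLp.ofLp ⁻¹' Icc a b, f x = ∑ e, ∫ x in Ωe e, f x := fun hf => by
    rw [← hcover, integral_iUnion_fintype hmeas hdisj fun e =>
      memLp_one_iff_integrable.1 (hmemLp hf e 1)]
  rw [setIntegral_inner_gradient_mul_self_eq_zero (fun i => (hab i).le) (hU.inter hV) hKW
    (hu.mono inter_subset_left) hdiv hubd ((hφ.mono inter_subset_right).of_le one_le_two),
    hpart (f := fun x => ‖gradient φ x‖ ^ 2) (hcg.pow 2),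
    hpart (f := fun x => φ x ^ 2) (hcφ.pow 2), hpart hcDg]
  simp only [Finset.mul_sum, ← Finset.sum_add_distrib, zero_add]
  refine Finset.sum_le_sum fun e _ => ?_
  have hδc : δ e ≤ 1 / (2 * π₁ * (Cinv * sSup (D '' Ωe e) / h e) ^ 2) :=
    (hδ2 e).trans_eq <| by rw [div_pow, mul_div_assoc', one_div_div]; ring
  exact supg_coercivity_of_inverse_estimate hε hπ₁ (hδ0 e) (hδ1 e) hδc (hmemLp hcφ e 2)
    (hmemLp hP e 2) (hmemLp hL e 2) (hmemLp hcg e 2)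
    (memLp_one_iff_integrable.1 (hmemLp hcDg e 1))
    (ae_restrict_of_forall_mem (hmeas e) fun x hx => hD1 x (hsub e hx)) (hinv e)

/-- SUPG coercivity: on a closed rectangular box `Ω ⊂ ℝ²`, with a `C¹`
divergence-free `u` vanishing on `∂Ω`, `ε, π₁ > 0`, `C¹` diffusivity `D ≥ 1` on `Ω`,
a measurable partition `Ω₁,…,Ω_m` of `Ω` with SUPG weights
`0 ≤ δ_e ≤ min{1/(2ε), h_e²/(2π₁C_inv²(sup_{Ω_e}D)²)}`, every `C²` scalar field `φ`
satisfying the elementwise inverse estimate obeys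
`a^ε_supg(φ,φ) ≥ (1/2)‖φ‖_supg²`. -/
theorem stmt3 (a b : Fin 2 → ℝ) (hab : ∀ i, a i < b i)
    (Ω : Set (EuclideanSpace ℝ (Fin 2)))
    (hΩ : Ω = {x : EuclideanSpace ℝ (Fin 2) | ∀ i, x i ∈ Set.Icc (a i) (b i)})
    (U : Set (EuclideanSpace ℝ (Fin 2))) (hU : IsOpen U) (hΩU : Ω ⊆ U)
    (u : EuclideanSpace ℝ (Fin 2) → EuclideanSpace ℝ (Fin 2))
    (hu : ContDiffOn ℝ 1 u U)
    (hdiv : ∀ x ∈ Ω, vdiv u x = 0)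
    (hubd : ∀ x ∈ frontier Ω, u x = 0)
    (ε π₁ : ℝ) (hε : 0 < ε) (hπ₁ : 0 < π₁)
    (D : EuclideanSpace ℝ (Fin 2) → ℝ) (hD : ContDiff ℝ 1 D)
    (hD1 : ∀ x ∈ Ω, 1 ≤ D x)
    (m : ℕ) (Ωe : Fin m → Set (EuclideanSpace ℝ (Fin 2)))
    (hmeas : ∀ e, MeasurableSet (Ωe e))
    (hdisj : Pairwise (Function.onFun Disjoint Ωe))
    (hcover : (⋃ e, Ωe e) = Ω)
    (h : Fin m → ℝ) (hh : ∀ e, 0 < h e)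
    (Cinv : ℝ) (hCinv : 0 < Cinv)
    (δ : Fin m → ℝ) (hδ0 : ∀ e, 0 ≤ δ e)
    (hδ1 : ∀ e, δ e ≤ 1 / (2 * ε))
    (hδ2 : ∀ e, δ e ≤ (h e) ^ 2 / (2 * π₁ * Cinv ^ 2 * (sSup (D '' Ωe e)) ^ 2))
    (V : Set (EuclideanSpace ℝ (Fin 2))) (hV : IsOpen V) (hΩV : Ω ⊆ V)
    (φ : EuclideanSpace ℝ (Fin 2) → ℝ)
    (hφ : ContDiffOn ℝ 2 φ V)
    (hinv : ∀ e, Real.sqrt (∫ x in Ωe e, (vdiv (fun y => D y • gradient φ y) x) ^ 2)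
      ≤ (Cinv * sSup (D '' Ωe e) / h e) *
        Real.sqrt (∫ x in Ωe e, ‖gradient φ x‖ ^ 2)) :
    (1 / 2) * (π₁ * (∫ x in Ω, ‖gradient φ x‖ ^ 2) + ε * (∫ x in Ω, (φ x) ^ 2)
        + ∑ e, δ e * (∫ x in Ωe e, ((inner ℝ (u x) (gradient φ x) : ℝ)) ^ 2)) ≤
      (∫ x in Ω, (inner ℝ (u x) (gradient φ x) : ℝ) * φ x)
        + π₁ * (∫ x in Ω, D x * ‖gradient φ x‖ ^ 2)
        + ε * (∫ x in Ω, (φ x) ^ 2)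
        + ∑ e, δ e * (∫ x in Ωe e,
            ((inner ℝ (u x) (gradient φ x) : ℝ) + ε * φ x
              - π₁ * vdiv (fun y => D y • gradient φ y) x)
            * (inner ℝ (u x) (gradient φ x) : ℝ)) :=
  stmt3_general a b hab Ω hΩ U hU hΩU u hu hdiv hubd ε π₁ hε hπ₁ D hD hD1 m Ωe hmeas hdisj hcover h
    Cinv δ hδ0 hδ1 hδ2 V hV hΩV φ hφ hinv
end

section
/- Let n ≥ 1, let N be a real n×n matrix with xᵀNx > 0 for every nonzero x ∈ ℝⁿ, and let z ∈ ℝⁿ be nonzero. Then for every b ∈ ℝⁿ and every c ∈ ℝ there exist a unique φ ∈ ℝⁿ and a unique λ ∈ ℝ such that Nφ + λz = b and zᵀφ = c; in particular the constrained discrete nanoparticle system Nφ + λz = b, zᵀφ = 1 has exactly one solution (φ, λ). -/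
open Matrix

/-!
The bordered map `(φ, λ) ↦ (Nφ + λz, zᵀφ)` is injective: if `Nφ + λz = 0` and `zᵀφ = 0`,
pairing the first equation with `φ` gives `φᵀNφ = 0`, so `φ = 0` by positivity, and then
`λz = 0` forces `λ = 0`. An injective endomorphism of a finite-dimensional space is bijective.
-/

section Bordered

variable {K ι : Type*} [Field K] [Fintype ι]

/-- The linear map of the saddle-point matrix `[[N, z], [zᵀ, 0]]`. -/
def borderedMap (N : Matrix ι ι K) (z : ι → K) : (ι → K) × K →ₗ[K] (ι → K) × K where
  toFun p := (N *ᵥ p.1 + p.2 • z, z ⬝ᵥ p.1)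
  map_add' p q := by
    refine Prod.ext ?_ (dotProduct_add z p.1 q.1)
    simp only [Prod.fst_add, Prod.snd_add, mulVec_add, add_smul]
    abel
  map_smul' a p := by
    refine Prod.ext ?_ (dotProduct_smul a z p.1)
    simp [mulVec_smul, smul_add, smul_smul]

@[simp]
theorem borderedMap_apply (N : Matrix ι ι K) (z : ι → K) (p : (ι → K) × K) :
    borderedMap N z p = (N *ᵥ p.1 + p.2 • z, z ⬝ᵥ p.1) :=
  rfl

theorem borderedMap_injective {N : Matrix ι ι K} {z : ι → K}
    (hN : ∀ x : ι → K, x ⬝ᵥ N *ᵥ x = 0 → x = 0) (hz : z ≠ 0) :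
    Function.Injective (borderedMap N z) := by
  rw [← LinearMap.ker_eq_bot, LinearMap.ker_eq_bot']
  rintro ⟨x, μ⟩ hp
  obtain ⟨hfirst, hconstraint⟩ := Prod.ext_iff.mp hp
  simp only [borderedMap_apply, Prod.fst_zero, Prod.snd_zero] at hfirst hconstraint
  have hquad : x ⬝ᵥ N *ᵥ x = 0 := by
    have := congrArg (x ⬝ᵥ ·) hfirst
    simpa [dotProduct_add, dotProduct_smul, dotProduct_comm x z, hconstraint] using this
  obtain rfl := hN x hquad
  rw [mulVec_zero, zero_add, smul_eq_zero] at hfirst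
  exact Prod.ext rfl (hfirst.resolve_right hz)

theorem borderedMap_bijective {N : Matrix ι ι K} {z : ι → K}
    (hN : ∀ x : ι → K, x ⬝ᵥ N *ᵥ x = 0 → x = 0) (hz : z ≠ 0) :
    Function.Bijective (borderedMap N z) :=
  let hinj := borderedMap_injective hN hz
  ⟨hinj, LinearMap.injective_iff_surjective.mp hinj⟩

end Bordered

theorem stmt6_general (n : ℕ) (N : Matrix (Fin n) (Fin n) ℝ)
    (hN : ∀ x : Fin n → ℝ, x ≠ 0 → 0 < x ⬝ᵥ N.mulVec x)
    (z : Fin n → ℝ) (hz : z ≠ 0) :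
    (∀ (b : Fin n → ℝ) (c : ℝ), ∃! p : (Fin n → ℝ) × ℝ,
        N.mulVec p.1 + p.2 • z = b ∧ z ⬝ᵥ p.1 = c) ∧
    (∀ b : Fin n → ℝ, ∃! p : (Fin n → ℝ) × ℝ,
        N.mulVec p.1 + p.2 • z = b ∧ z ⬝ᵥ p.1 = 1) := by
  have hanisotropic : ∀ x : Fin n → ℝ, x ⬝ᵥ N *ᵥ x = 0 → x = 0 := fun x hx =>
    by_contra fun hx0 => (hN x hx0).ne' hx
  have hsolve : ∀ (b : Fin n → ℝ) (c : ℝ), ∃! p : (Fin n → ℝ) × ℝ,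
      N.mulVec p.1 + p.2 • z = b ∧ z ⬝ᵥ p.1 = c := fun b c => by
    simpa only [borderedMap_apply, Prod.ext_iff] using
      (borderedMap_bijective hanisotropic hz).existsUnique (b, c)
  exact ⟨hsolve, fun b => hsolve b 1⟩

/-- With `xᵀNx > 0` for nonzero `x` and `z ≠ 0`, for every `b` and `c`
there is a unique pair `(φ, λ)` with `Nφ + λz = b` and `zᵀφ = c`; in particular the
constrained system with `zᵀφ = 1` has exactly one solution. -/
theorem stmt6 (n : ℕ) (hn : 1 ≤ n) (N : Matrix (Fin n) (Fin n) ℝ)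
    (hN : ∀ x : Fin n → ℝ, x ≠ 0 → 0 < x ⬝ᵥ N.mulVec x)
    (z : Fin n → ℝ) (hz : z ≠ 0) :
    (∀ (b : Fin n → ℝ) (c : ℝ), ∃! p : (Fin n → ℝ) × ℝ,
        N.mulVec p.1 + p.2 • z = b ∧ z ⬝ᵥ p.1 = c) ∧
    (∀ b : Fin n → ℝ, ∃! p : (Fin n → ℝ) × ℝ,
        N.mulVec p.1 + p.2 • z = b ∧ z ⬝ᵥ p.1 = 1) :=
  stmt6_general n N hN z hz
end
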